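/- With the s-dependent orthogonal family setup, define κ_n(s)² := 2πi/h_n(s), B_n(s) := −p_{n+1}(0,s)/p_n(0,s) and, for n ≥ 1, C_n(s) := B_n(s)·h_n(s)/h_{n−1}(s), and assume the recursion z·(p_n(z,s) + C_n(s) p_{n−1}(z,s)) = p_{n+1}(z,s) + B_n(s) p_n(z,s) holds for all n ≥ 1 and s > 0. Then for every n ≥ 1 and s > 0 with κ_n(s)² ≠ κ_{n−1}(s)²: B_n(s) = −(d/ds κ_n(s)²)/(2 (κ_n(s)² − κ_{n−1}(s)²)). -/

import Mathlib

/-!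
Write `⟨f, g⟩_s` for the pairing defining `h_n`, so that `h_n(s) = ⟨p_n, p_n⟩_s`. Differentiating
under the integral multiplies the weight by `z + z⁻¹`, while the `s`-derivative of the monic `p_n`
has degree `< n` and is therefore orthogonal to `p_n`. Since `z ↦ z⁻¹` makes the pairing symmetric,
this gives `h_n' = 2 ⟨z p_n, p_n⟩`. The recurrence reads
`z p_n = p_{n+1} + B_n p_n - C_n z p_{n-1}`, and `z p_{n-1} - p_n` has degree `< n`, so
`⟨z p_n, p_n⟩ = (B_n - C_n) h_n = B_n (1 - h_n / h_{n-1}) h_n`. Substituting `κ_n² = 2πi / h_n`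
turns this into the claimed formula.
-/

open Polynomial Complex Metric Filter Topology MeasureTheory
open scoped Real

theorem hasDerivAt_intervalIntegral_mul_cexp {a b : ℝ → ℂ} (ha : Continuous a) (hb : Continuous b)
    (u v s : ℝ) :
    HasDerivAt (fun t : ℝ => ∫ θ in u..v, a θ * exp (t * b θ))
      (∫ θ in u..v, a θ * b θ * exp (s * b θ)) s := by
  have hF : ∀ t : ℝ, Continuous fun θ => a θ * exp (t * b θ) := fun t => by fun_prop
  have hF' : ∀ t : ℝ, Continuous fun θ => a θ * b θ * exp (t * b θ) := fun t => by fun_prop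
  refine (intervalIntegral.hasDerivAt_integral_of_dominated_loc_of_deriv_le
    (F := fun (t : ℝ) θ => a θ * exp (t * b θ)) (F' := fun (t : ℝ) θ => a θ * b θ * exp (t * b θ))
    (bound := fun θ => ‖a θ * b θ‖ * Real.exp ((|s| + 1) * ‖b θ‖))
    (ball_mem_nhds s one_pos) (Eventually.of_forall fun t => (hF t).aestronglyMeasurable)
    ((hF s).intervalIntegrable _ _) (hF' s).aestronglyMeasurable ?_
    ((by fun_prop : Continuous _).intervalIntegrable _ _) ?_).2
  · refine ae_of_all _ fun θ _ t ht => ?_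
    have hts : |t| ≤ |s| + 1 := by
      have := abs_sub_abs_le_abs_sub t s
      rw [mem_ball, Real.dist_eq] at ht
      linarith
    rw [norm_mul, norm_exp]
    gcongr
    calc (↑t * b θ).re ≤ ‖(t : ℂ) * b θ‖ := re_le_norm _
      _ = |t| * ‖b θ‖ := by rw [norm_mul, norm_real, Real.norm_eq_abs]
      _ ≤ (|s| + 1) * ‖b θ‖ := by gcongr
  · refine ae_of_all _ fun θ _ t _ => ?_
    have hderiv := (((hasDerivAt_id (t : ℂ)).mul_const (b θ)).cexp.const_mul (a θ)).comp_ofReal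
    exact hderiv.congr_deriv (by simp only [id, one_mul]; ring)

theorem hasDerivAt_circleIntegral_mul_cexp {g φ : ℂ → ℂ} {c : ℂ} {R : ℝ}
    (hg : ContinuousOn g (sphere c |R|)) (hφ : ContinuousOn φ (sphere c |R|)) (s : ℝ) :
    HasDerivAt (fun t : ℝ => ∮ z in C(c, R), g z * exp (t * φ z))
      (∮ z in C(c, R), g z * φ z * exp (s * φ z)) s := by
  have hcont {f : ℂ → ℂ} (hf : ContinuousOn f (sphere c |R|)) :
      Continuous fun θ => f (circleMap c R θ) :=
    hf.comp_continuous (continuous_circleMap c R) (circleMap_mem_sphere' c R)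
  have hderiv := hasDerivAt_intervalIntegral_mul_cexp
    (a := fun θ => circleMap 0 R θ * I * g (circleMap c R θ))
    (((continuous_circleMap 0 R).mul continuous_const).mul (hcont hg)) (hcont hφ) 0 (2 * π) s
  simpa only [circleIntegral, deriv_circleMap, smul_eq_mul, ← mul_assoc] using hderiv

theorem circleIntegral_comp_inv_div_self (F : ℂ → ℂ) :
    (∮ z in C(0, 1), F z⁻¹ / z) = ∮ z in C(0, 1), F z / z := by
  have hne (θ : ℝ) : circleMap 0 1 θ ≠ 0 := circleMap_ne_center one_ne_zero
  simp only [circleIntegral, deriv_circleMap, smul_eq_mul, circleMap_zero_inv, inv_one]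
  have hcancel (θ : ℝ) (w : ℂ) : circleMap 0 1 θ * I * (w / circleMap 0 1 θ) = I * w := by
    field_simp [hne θ]
  simp only [hcancel]
  have hper : Function.Periodic (fun θ => I * F (circleMap 0 1 θ)) (2 * π) := fun θ => by
    simp only [periodic_circleMap 0 1 θ]
  rw [intervalIntegral.integral_comp_neg (fun θ => I * F (circleMap 0 1 θ)), neg_zero]
  simpa using hper.intervalIntegral_add_eq (-(2 * π)) 0

theorem circleIntegrable_eval_mul_eval_inv_mul_cexp (s : ℝ) (f g : ℂ[X]) :
    CircleIntegrable (fun z => f.eval z * g.eval z⁻¹ * exp (s * (z + z⁻¹)) / z) 0 1 := by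
  refine ContinuousOn.circleIntegrable zero_le_one ?_
  have hz : ∀ z ∈ sphere (0 : ℂ) 1, z ≠ 0 := fun z hz => ne_zero_of_mem_unit_sphere ⟨z, hz⟩
  fun_prop (disch := assumption)

noncomputable def expPairing (s : ℝ) : ℂ[X] →ₗ[ℂ] ℂ[X] →ₗ[ℂ] ℂ :=
  LinearMap.mk₂ ℂ (fun f g => ∮ z in C(0, 1), f.eval z * g.eval z⁻¹ * exp (s * (z + z⁻¹)) / z)
    (fun f₁ f₂ g => by
      rw [← circleIntegral.integral_add (circleIntegrable_eval_mul_eval_inv_mul_cexp s f₁ g)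
        (circleIntegrable_eval_mul_eval_inv_mul_cexp s f₂ g)]
      simp only [eval_add]; congr 1; funext z; ring)
    (fun a f g => by
      rw [smul_eq_mul, ← circleIntegral.integral_const_mul]
      simp only [eval_smul, smul_eq_mul]; congr 1; funext z; ring)
    (fun f g₁ g₂ => by
      rw [← circleIntegral.integral_add (circleIntegrable_eval_mul_eval_inv_mul_cexp s f g₁)
        (circleIntegrable_eval_mul_eval_inv_mul_cexp s f g₂)]
      simp only [eval_add]; congr 1; funext z; ring)
    (fun a f g => by
      rw [smul_eq_mul, ← circleIntegral.integral_const_mul]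
      simp only [eval_smul, smul_eq_mul]; congr 1; funext z; ring)

theorem expPairing_apply (s : ℝ) (f g : ℂ[X]) :
    expPairing s f g = ∮ z in C(0, 1), f.eval z * g.eval z⁻¹ * exp (s * (z + z⁻¹)) / z :=
  rfl

theorem expPairing_comm (s : ℝ) (f g : ℂ[X]) : expPairing s f g = expPairing s g f := by
  have hinv := circleIntegral_comp_inv_div_self fun w => f.eval w⁻¹ * g.eval w * exp (s * (w⁻¹ + w))
  simp only [inv_inv] at hinv
  rw [expPairing_apply, expPairing_apply, hinv]
  congr 1; funext z; rw [add_comm z⁻¹]; ring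

theorem hasDerivAt_expPairing (f g : ℂ[X]) (s : ℝ) :
    HasDerivAt (fun t => expPairing t f g) (expPairing s (X * f) g + expPairing s f (X * g)) s := by
  have hz : ∀ z ∈ sphere (0 : ℂ) |1|, z ≠ 0 := fun z hz =>
    ne_zero_of_mem_unit_sphere ⟨z, by simpa using hz⟩
  have hderiv := hasDerivAt_circleIntegral_mul_cexp (c := 0) (R := 1)
    (g := fun z => f.eval z * g.eval z⁻¹ / z) (φ := fun z => z + z⁻¹)
    (by fun_prop (disch := assumption)) (by fun_prop (disch := assumption)) s
  simp only [expPairing_apply]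
  rw [← circleIntegral.integral_add (circleIntegrable_eval_mul_eval_inv_mul_cexp s _ _)
    (circleIntegrable_eval_mul_eval_inv_mul_cexp s _ _)]
  convert hderiv using 1
  · funext t; congr 1; funext z; ring
  · congr 1; funext z; simp only [eval_mul, eval_X]; ring

theorem LinearMap.apply_apply_eq_sum_coeff {R M : Type*} [CommSemiring R] [AddCommMonoid M]
    [Module R M] (B : R[X] →ₗ[R] R[X] →ₗ[R] M) {f g : R[X]} {N : ℕ} (hf : f.natDegree < N)
    (hg : g.natDegree < N) :
    B f g = ∑ k ∈ Finset.range N, ∑ l ∈ Finset.range N,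
      (f.coeff k * g.coeff l) • B (X ^ k) (X ^ l) := by
  conv_lhs => rw [f.as_sum_range_C_mul_X_pow' hf, g.as_sum_range_C_mul_X_pow' hg]
  simp only [← smul_eq_C_mul, map_sum, map_smul, LinearMap.sum_apply, LinearMap.smul_apply,
    Finset.smul_sum, smul_smul]
  rw [Finset.sum_comm]
  simp only [mul_comm (g.coeff _)]

theorem hasDerivAt_expPairing_of_hasDerivAt_coeff {p r : ℝ → ℂ[X]} {p' r' : ℂ[X]} {s : ℝ}
    {N : ℕ} (hp : ∀ᶠ t in 𝓝 s, (p t).natDegree < N) (hr : ∀ᶠ t in 𝓝 s, (r t).natDegree < N)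
    (hp' : p'.natDegree < N) (hr' : r'.natDegree < N)
    (hpd : ∀ k, HasDerivAt (fun t => (p t).coeff k) (p'.coeff k) s)
    (hrd : ∀ k, HasDerivAt (fun t => (r t).coeff k) (r'.coeff k) s) :
    HasDerivAt (fun t => expPairing t (p t) (r t))
      (expPairing s p' (r s) + expPairing s (p s) r' + expPairing s (X * p s) (r s) +
        expPairing s (p s) (X * r s)) s := by
  have hsum := HasDerivAt.fun_sum (u := Finset.range N) fun k _ =>
    HasDerivAt.fun_sum (u := Finset.range N) fun l _ =>
      ((hpd k).mul (hrd l)).mul (hasDerivAt_expPairing (X ^ k) (X ^ l) s)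
  have hev : (fun t => expPairing t (p t) (r t)) =ᶠ[𝓝 s]
      fun t => ∑ k ∈ Finset.range N, ∑ l ∈ Finset.range N,
        (p t).coeff k * (r t).coeff l * expPairing t (X ^ k) (X ^ l) := by
    filter_upwards [hp, hr] with t hpt hrt
    simpa only [smul_eq_mul] using (expPairing t).apply_apply_eq_sum_coeff hpt hrt
  refine (hsum.congr_of_eventuallyEq hev).congr_deriv ?_
  have hp₀ := hp.self_of_nhds
  have hr₀ := hr.self_of_nhds
  have expand := fun (B : ℂ[X] →ₗ[ℂ] ℂ[X] →ₗ[ℂ] ℂ) {f g : ℂ[X]} (hf : f.natDegree < N)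
      (hg : g.natDegree < N) => by simpa only [smul_eq_mul] using B.apply_apply_eq_sum_coeff hf hg
  have hXl := expand ((expPairing s).compl₁₂ (LinearMap.mulLeft ℂ X) LinearMap.id) hp₀ hr₀
  have hXr := expand ((expPairing s).compl₂ (LinearMap.mulLeft ℂ X)) hp₀ hr₀
  simp only [LinearMap.compl₁₂_apply, LinearMap.compl₂_apply, LinearMap.mulLeft_apply,
    LinearMap.id_apply] at hXl hXr
  rw [hXl, hXr, expand _ hp' hr₀, expand _ hp₀ hr']
  simp only [← Finset.sum_add_distrib, Pi.mul_apply]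
  refine Finset.sum_congr rfl fun k _ => Finset.sum_congr rfl fun l _ => ?_
  ring

theorem exists_hasDerivAt_coeff_of_isMonicOfDegree {p : ℝ → ℂ[X]} {n : ℕ} {s : ℝ}
    (hp : ∀ᶠ t in 𝓝 s, IsMonicOfDegree (p t) n)
    (hd : ∀ k < n, DifferentiableAt ℝ (fun t => (p t).coeff k) s) :
    ∃ q : ℂ[X], q.degree < n ∧ ∀ k, HasDerivAt (fun t => (p t).coeff k) (q.coeff k) s := by
  set q := ∑ k ∈ Finset.range n, C (deriv (fun t => (p t).coeff k) s) * X ^ k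
  have hq (k : ℕ) : q.coeff k = if k < n then deriv (fun t => (p t).coeff k) s else 0 := by
    simp [q]
  refine ⟨q, (degree_lt_iff_coeff_zero _ _).2 fun k hk => by simp [hq, hk.not_gt], fun k => ?_⟩
  rw [hq]
  split_ifs with hk
  · exact (hd k hk).hasDerivAt
  · refine (hasDerivAt_const s (if k = n then (1 : ℂ) else 0)).congr_of_eventuallyEq ?_
    filter_upwards [hp] with t ht
    rcases (not_lt.1 hk).eq_or_lt with rfl | hk
    · simpa [ht.natDegree_eq] using ht.monic.coeff_natDegree
    · simp [hk.ne', coeff_eq_zero_of_natDegree_lt (ht.natDegree_eq ▸ hk)]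

theorem LinearMap.map_eq_zero_of_degree_lt {R M : Type*} [CommRing R] [AddCommGroup M]
    [Module R M] (L : R[X] →ₗ[R] M) {p : ℕ → R[X]} {n : ℕ}
    (hp : ∀ k < n, IsMonicOfDegree (p k) k) (hL : ∀ k < n, L (p k) = 0) {q : R[X]}
    (hq : q.degree < n) : L q = 0 := by
  induction n generalizing q with
  | zero =>
    have : q = 0 := Polynomial.ext fun m => by
      simpa using (degree_lt_iff_coeff_zero q 0).1 hq m m.zero_le
    rw [this, map_zero]
  | succ n ih =>
    have hr : (q - C (q.coeff n) * p n).degree < n := by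
      refine (degree_lt_iff_coeff_zero _ _).2 fun m hm => ?_
      have hpn := hp n n.lt_succ_self
      rw [coeff_sub, coeff_C_mul]
      rcases hm.eq_or_lt with rfl | hm
      · have hlead := hpn.monic.coeff_natDegree
        rw [hpn.natDegree_eq] at hlead
        rw [hlead, mul_one, sub_self]
      · have hpm : (p n).natDegree < m := by rw [hpn.natDegree_eq]; exact hm
        rw [(degree_lt_iff_coeff_zero q _).1 hq m hm, coeff_eq_zero_of_natDegree_lt hpm,
          mul_zero, sub_zero]
    have hq' : q = (q - C (q.coeff n) * p n) + q.coeff n • p n := by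
      rw [smul_eq_C_mul]; ring
    rw [hq', map_add, map_smul, hL n n.lt_succ_self, smul_zero, add_zero,
      ih (fun k hk => hp k (hk.trans n.lt_succ_self)) (fun k hk => hL k (hk.trans n.lt_succ_self))
        hr]

theorem hasDerivAt_expPairing_self {p : ℝ → ℂ[X]} {n : ℕ} {s : ℝ}
    (hp : ∀ᶠ t in 𝓝 s, IsMonicOfDegree (p t) n)
    (hd : ∀ k < n, DifferentiableAt ℝ (fun t => (p t).coeff k) s)
    (horth : ∀ q : ℂ[X], q.degree < n → expPairing s q (p s) = 0) :
    HasDerivAt (fun t => expPairing t (p t) (p t)) (2 * expPairing s (X * p s) (p s)) s := by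
  obtain ⟨q, hq, hqd⟩ := exists_hasDerivAt_coeff_of_isMonicOfDegree hp hd
  have hpN : ∀ᶠ t in 𝓝 s, (p t).natDegree < n + 1 :=
    hp.mono fun t ht => ht.natDegree_eq ▸ n.lt_succ_self
  have hqN : q.natDegree < n + 1 := Nat.lt_succ_of_le (natDegree_le_of_degree_le hq.le)
  convert hasDerivAt_expPairing_of_hasDerivAt_coeff hpN hpN hqN hqN hqd hqd using 1
  rw [expPairing_comm s (p s) q, horth q hq, expPairing_comm s (p s) (X * p s)]
  ring

theorem LinearMap.apply_X_mul_self_eq_of_recurrence {R : Type*} [CommRing R]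
    (P : R[X] →ₗ[R] R[X] →ₗ[R] R) {p₀ p₁ p₂ : R[X]} {n : ℕ} {b c : R}
    (hp₀ : IsMonicOfDegree p₀ n) (hp₁ : IsMonicOfDegree p₁ (n + 1))
    (hlow : ∀ q : R[X], q.degree < ↑(n + 1) → P q p₁ = 0) (horth : P p₂ p₁ = 0)
    (hrec : X * (p₁ + C c * p₀) = p₂ + C b * p₁) :
    P (X * p₁) p₁ = (b - c) * P p₁ p₁ := by
  nontriviality R
  have hshift : P (X * p₀) p₁ = P p₁ p₁ := by
    have hXp₀ : IsMonicOfDegree (X * p₀) (n + 1) := by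
      simpa only [add_comm 1] using (isMonicOfDegree_X R).mul hp₀
    have hdeg := hXp₀.natDegree_sub_lt n.succ_ne_zero hp₁
    rw [← sub_eq_zero, ← LinearMap.sub_apply, ← map_sub]
    exact hlow _ (degree_le_natDegree.trans_lt (mod_cast hdeg))
  have hXp₁ : X * p₁ = p₂ + b • p₁ - c • (X * p₀) := by
    simp only [smul_eq_C_mul]; linear_combination hrec
  rw [hXp₁, map_sub, map_add, map_smul, map_smul, LinearMap.sub_apply, LinearMap.add_apply,
    LinearMap.smul_apply, LinearMap.smul_apply, horth, hshift, smul_eq_mul, smul_eq_mul]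
  ring

theorem eq_neg_deriv_div_sub_of_hasDerivAt (a : ℂ) {H : ℝ → ℂ} {s : ℝ} {B H₀ : ℂ}
    (hH : HasDerivAt H (2 * (B - B * H s / H₀) * H s) s) (hHs : H s ≠ 0)
    (hne : a / H s ≠ a / H₀) :
    B = -deriv (fun t => a / H t) s / (2 * (a / H s - a / H₀)) := by
  rw [((hasDerivAt_const s a).fun_div hH hHs).deriv]
  have hsub : a / H s - a / H₀ ≠ 0 := sub_ne_zero.2 hne
  rw [eq_div_iff (mul_ne_zero two_ne_zero hsub)]
  field_simp
  ring

theorem stmt_14_general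
    (p : ℕ → ℝ → Polynomial ℂ)
    (hmonic : ∀ n s, 0 < s → (p n s).Monic)
    (hdeg : ∀ n s, 0 < s → (p n s).natDegree = n)
    (horth : ∀ (n m : ℕ) (s : ℝ), 0 < s → n ≠ m →
      (∮ z in C(0, 1), (p n s).eval z * (p m s).eval z⁻¹ *
        Complex.exp (s * (z + z⁻¹)) / z) = 0)
    (h : ℕ → ℝ → ℂ)
    (hh : ∀ (n : ℕ) (s : ℝ), 0 < s → h n s =
      ∮ z in C(0, 1), (p n s).eval z * (p n s).eval z⁻¹ *
        Complex.exp (s * (z + z⁻¹)) / z)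
    (hne : ∀ (n : ℕ) (s : ℝ), 0 < s → h n s ≠ 0)
    (hcoeffdiff : ∀ (n k : ℕ), k ≤ n →
      DifferentiableOn ℝ (fun s => (p n s).coeff k) (Set.Ioi (0 : ℝ)))
    (κsq : ℕ → ℝ → ℂ)
    (hκ : ∀ (n : ℕ) (s : ℝ), κsq n s = 2 * Real.pi * Complex.I / h n s)
    (Bn Cn : ℕ → ℝ → ℂ)
    (hC : ∀ (n : ℕ) (s : ℝ), 1 ≤ n → 0 < s → Cn n s = Bn n s * h n s / h (n - 1) s)
    (hrec : ∀ (n : ℕ) (s : ℝ), 1 ≤ n → 0 < s →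
      Polynomial.X * (p n s + Polynomial.C (Cn n s) * p (n - 1) s) =
        p (n + 1) s + Polynomial.C (Bn n s) * p n s)
    (n : ℕ) (s : ℝ) (hn : 1 ≤ n) (hs : 0 < s)
    (hk : κsq n s ≠ κsq (n - 1) s) :
    Bn n s = -(deriv (κsq n) s) / (2 * (κsq n s - κsq (n - 1) s)) := by
  obtain ⟨n, rfl⟩ : ∃ m, n = m + 1 := ⟨n - 1, by omega⟩
  have hpos : ∀ᶠ t in 𝓝 s, 0 < t := lt_mem_nhds hs
  have hmd (k : ℕ) {t : ℝ} (ht : 0 < t) : IsMonicOfDegree (p k t) k :=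
    ⟨hdeg k t ht, hmonic k t ht⟩
  have hpair (k l : ℕ) (hkl : k ≠ l) : expPairing s (p k s) (p l s) = 0 := by
    rw [expPairing_apply]; exact horth k l s hs hkl
  have hlow (q : ℂ[X]) (hq : q.degree < ↑(n + 1)) : expPairing s q (p (n + 1) s) = 0 := by
    simpa only [LinearMap.flip_apply] using
      ((expPairing s).flip (p (n + 1) s)).map_eq_zero_of_degree_lt (fun k _ => hmd k hs)
        (fun k hk => by rw [LinearMap.flip_apply]; exact hpair k _ hk.ne) hq
  have hX := (expPairing s).apply_X_mul_self_eq_of_recurrence (hmd n hs) (hmd (n + 1) hs) hlow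
    (hpair _ _ (by omega)) (hrec (n + 1) s (by omega) hs)
  have hCn := hC (n + 1) s (by omega) hs
  rw [add_tsub_cancel_right] at hCn hk ⊢
  have hH : HasDerivAt (h (n + 1))
      (2 * (Bn (n + 1) s - Bn (n + 1) s * h (n + 1) s / h n s) * h (n + 1) s) s := by
    have hd (k : ℕ) (hk : k < n + 1) : DifferentiableAt ℝ (fun t => (p (n + 1) t).coeff k) s :=
      (hcoeffdiff _ k hk.le).differentiableAt (Ioi_mem_nhds hs)
    refine ((hasDerivAt_expPairing_self (hpos.mono fun t ht => hmd (n + 1) ht) hd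
      hlow).congr_of_eventuallyEq (hpos.mono fun t ht => ?_)).congr_deriv ?_
    · show h (n + 1) t = expPairing t _ _
      rw [expPairing_apply, hh _ t ht]
    · rw [hX, ← hCn, hh _ s hs, ← expPairing_apply]; ring
  rw [show κsq (n + 1) = fun t => 2 * π * I / h (n + 1) t from funext (hκ _), hκ n s] at hk ⊢
  exact eq_neg_deriv_div_sub_of_hasDerivAt _ hH (hne _ s hs) hk

/-- Lemma 6 (ii): `B_n = −(κ_n²)′/(2(κ_n² − κ_{n−1}²))` where `κ_n(s)² = 2πi/h_n(s)`. -/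
theorem stmt_14
    (p : ℕ → ℝ → Polynomial ℂ)
    (hmonic : ∀ n s, 0 < s → (p n s).Monic)
    (hdeg : ∀ n s, 0 < s → (p n s).natDegree = n)
    (hreal : ∀ n s, 0 < s → ∀ k, ((p n s).coeff k).im = 0)
    (hp0 : ∀ n s, 0 < s → (p n s).coeff 0 ≠ 0)
    (horth : ∀ (n m : ℕ) (s : ℝ), 0 < s → n ≠ m →
      (∮ z in C(0, 1), (p n s).eval z * (p m s).eval z⁻¹ *
        Complex.exp (s * (z + z⁻¹)) / z) = 0)
    (h : ℕ → ℝ → ℂ)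
    (hh : ∀ (n : ℕ) (s : ℝ), 0 < s → h n s =
      ∮ z in C(0, 1), (p n s).eval z * (p n s).eval z⁻¹ *
        Complex.exp (s * (z + z⁻¹)) / z)
    (hne : ∀ (n : ℕ) (s : ℝ), 0 < s → h n s ≠ 0)
    (hcoeffdiff : ∀ (n k : ℕ), k ≤ n →
      DifferentiableOn ℝ (fun s => (p n s).coeff k) (Set.Ioi (0 : ℝ)))
    (κsq : ℕ → ℝ → ℂ)
    (hκ : ∀ (n : ℕ) (s : ℝ), κsq n s = 2 * Real.pi * Complex.I / h n s)
    (Bn Cn : ℕ → ℝ → ℂ)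
    (hB : ∀ (n : ℕ) (s : ℝ), 0 < s → Bn n s = -((p (n + 1) s).coeff 0 / (p n s).coeff 0))
    (hC : ∀ (n : ℕ) (s : ℝ), 1 ≤ n → 0 < s → Cn n s = Bn n s * h n s / h (n - 1) s)
    (hrec : ∀ (n : ℕ) (s : ℝ), 1 ≤ n → 0 < s →
      Polynomial.X * (p n s + Polynomial.C (Cn n s) * p (n - 1) s) =
        p (n + 1) s + Polynomial.C (Bn n s) * p n s)
    (n : ℕ) (s : ℝ) (hn : 1 ≤ n) (hs : 0 < s)
    (hk : κsq n s ≠ κsq (n - 1) s) :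
    Bn n s = -(deriv (κsq n) s) / (2 * (κsq n s - κsq (n - 1) s)) :=
  stmt_14_general p hmonic hdeg horth h hh hne hcoeffdiff κsq hκ Bn Cn hC hrec n s hn hs hk
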